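/- arXiv:2602.07999 — 8 statements merged into one kernel-verified Lean document; each statement's English description precedes it below -/
import Mathlib

section
/- For probability measures P ≪ Q on a measurable space and any measurable set E, P(E) ≤ Q(E) + sqrt(Q(E)·(1 − Q(E))·χ²(P‖Q)), where χ²(P‖Q) = ∫ ((dP/dQ)² − 1) dQ. -/
/-!
Write `f = dP/dQ`. Since `∫ f dQ = 1`, the gap `P(E) - Q(E) = ∫_E f dQ - Q(E) ∫ f dQ` is the
`Q`-covariance of `1_E` and `f`, while `Var_Q[1_E] = Q(E)(1 - Q(E))` and `Var_Q[f] = χ²(P‖Q)`.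
The bound is the Cauchy–Schwarz inequality for covariances.
-/

open MeasureTheory ProbabilityTheory

namespace ProbabilityTheory

variable {Ω : Type*} {mΩ : MeasurableSpace Ω} {μ : Measure Ω}

lemma covariance_sq_le_variance_mul [IsFiniteMeasure μ] {X Y : Ω → ℝ} (hX : MemLp X 2 μ)
    (hY : MemLp Y 2 μ) : cov[X, Y; μ] ^ 2 ≤ Var[X; μ] * Var[Y; μ] := by
  -- `Var[X - t • Y] ≥ 0` is a quadratic in `t` whose discriminant must be nonpositive.
  have hquad (t : ℝ) : 0 ≤ Var[Y; μ] * (t * t) + -2 * cov[X, Y; μ] * t + Var[X; μ] := by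
    have h := variance_nonneg (X - t • Y) μ
    rw [variance_sub hX (hY.const_smul t), covariance_smul_right, variance_smul] at h
    linarith
  have h := discrim_le_zero hquad
  rw [discrim] at h
  linarith

lemma memLp_indicator_one [IsFiniteMeasure μ] {s : Set Ω} (hs : MeasurableSet s) (p : ENNReal) :
    MemLp (s.indicator (1 : Ω → ℝ)) p μ :=
  (memLp_const 1).indicator hs

lemma variance_indicator_one [IsProbabilityMeasure μ] {s : Set Ω} (hs : MeasurableSet s) :
    Var[s.indicator 1; μ] = μ.real s * (1 - μ.real s) := by
  have hsq : s.indicator (1 : Ω → ℝ) ^ 2 = s.indicator 1 := by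
    ext ω; by_cases hω : ω ∈ s <;> simp [hω]
  rw [variance_eq_sub (memLp_indicator_one hs 2), hsq, integral_indicator_one hs]
  ring

lemma covariance_indicator_one_left [IsProbabilityMeasure μ] {s : Set Ω} (hs : MeasurableSet s)
    {X : Ω → ℝ} (hX : MemLp X 2 μ) :
    cov[s.indicator 1, X; μ] = ∫ ω in s, X ω ∂μ - μ.real s * μ[X] := by
  have hmul : s.indicator (1 : Ω → ℝ) * X = s.indicator X := by
    ext ω; by_cases hω : ω ∈ s <;> simp [hω]
  rw [covariance_eq_sub (memLp_indicator_one hs 2) hX, hmul, integral_indicator hs,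
    integral_indicator_one hs]

lemma variance_toReal_rnDeriv {P Q : Measure Ω} [IsProbabilityMeasure P] [IsProbabilityMeasure Q]
    (hPQ : P ≪ Q) (hf : MemLp (fun x ↦ (P.rnDeriv Q x).toReal) 2 Q) :
    Var[fun x ↦ (P.rnDeriv Q x).toReal; Q] = ∫ x, (P.rnDeriv Q x).toReal ^ 2 ∂Q - 1 := by
  rw [variance_eq_sub hf, Measure.integral_toReal_rnDeriv hPQ, probReal_univ]
  simp

end ProbabilityTheory

/-- Chi-squared change of measure:
`P(E) ≤ Q(E) + sqrt(Q(E)(1 − Q(E)) χ²(P‖Q))` where `χ²(P‖Q) = ∫ (dP/dQ)² dQ − 1`. -/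
theorem chisq_change_of_measure {X : Type*} [MeasurableSpace X]
    (P Q : Measure X) [IsProbabilityMeasure P] [IsProbabilityMeasure Q]
    (hPQ : P ≪ Q)
    (hint : Integrable (fun x => ((P.rnDeriv Q x).toReal) ^ 2) Q)
    (E : Set X) (hE : MeasurableSet E) :
    (P E).toReal ≤ (Q E).toReal +
      Real.sqrt ((Q E).toReal * (1 - (Q E).toReal) *
        ((∫ x, ((P.rnDeriv Q x).toReal) ^ 2 ∂Q) - 1)) := by
  have hf : MemLp (fun x ↦ (P.rnDeriv Q x).toReal) 2 Q :=
    (memLp_two_iff_integrable_sq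
      (Measure.measurable_rnDeriv P Q).ennreal_toReal.aestronglyMeasurable).2 hint
  have hcov : cov[E.indicator 1, fun x ↦ (P.rnDeriv Q x).toReal; Q] = P.real E - Q.real E := by
    rw [covariance_indicator_one_left hE hf, Measure.setIntegral_toReal_rnDeriv hPQ,
      Measure.integral_toReal_rnDeriv hPQ, probReal_univ, mul_one]
  have hCS := Real.le_sqrt_of_sq_le (covariance_sq_le_variance_mul (memLp_indicator_one hE 2) hf)
  rw [hcov, variance_indicator_one hE, variance_toReal_rnDeriv hPQ hf] at hCS
  simp only [measureReal_def] at hCS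
  linarith
end

section
/- For probability measures P ≪ Q, any measurable set E, and any c > 0, P(E) ≤ (KL(P‖Q) + log(1 + Q(E)(e^c − 1))) / c, where KL denotes the Kullback–Leibler divergence. -/
/-!
Donsker–Varadhan with the test function `c • 𝟙_E`: Gibbs' inequality for `P` against the
exponentially tilted measure `Q.tilted f` gives `∫ f ∂P - log ∫ exp f ∂Q ≤ KL(P‖Q)`, and for
`f = c • 𝟙_E` the left side is `c P(E) - log (1 + Q(E)(e^c - 1))`.
-/

open MeasureTheory Real

namespace MeasureTheory

variable {α : Type*}

theorem exp_indicator_const {E : Set α} (c : ℝ) :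
    (fun x ↦ exp (E.indicator (fun _ ↦ c) x)) = fun x ↦ 1 + E.indicator (fun _ ↦ exp c - 1) x := by
  ext x
  by_cases hx : x ∈ E <;> simp [hx]

variable [MeasurableSpace α]

theorem integral_sub_log_integral_exp_le_integral_llr {μ ν : Measure α}
    [IsProbabilityMeasure μ] [SigmaFinite ν] (hμν : μ ≪ ν) (h_int : Integrable (llr μ ν) μ)
    {f : α → ℝ} (hfμ : Integrable f μ) (hfν : Integrable (fun x ↦ exp (f x)) ν) :
    ∫ x, f x ∂μ - log (∫ x, exp (f x) ∂ν) ≤ ∫ x, llr μ ν x ∂μ := by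
  have : NeZero ν :=
    ⟨fun h ↦ IsProbabilityMeasure.ne_zero μ (Measure.absolutelyContinuous_zero_iff.mp (h ▸ hμν))⟩
  have : IsProbabilityMeasure (ν.tilted f) := isProbabilityMeasure_tilted hfν
  have gibbs := InformationTheory.integral_llr_add_sub_measure_univ_nonneg
    (hμν.trans (absolutelyContinuous_tilted hfν)) (integrable_llr_tilted_right hμν hfμ h_int hfν)
  rw [integral_llr_tilted_right hμν hfμ hfν h_int] at gibbs
  simp only [probReal_univ] at gibbs
  linarith

theorem integral_exp_indicator_const {μ : Measure α} [IsProbabilityMeasure μ] {E : Set α}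
    (hE : MeasurableSet E) (c : ℝ) :
    ∫ x, exp (E.indicator (fun _ ↦ c) x) ∂μ = 1 + μ.real E * (exp c - 1) := by
  rw [exp_indicator_const, integral_add (integrable_const _) ((integrable_const _).indicator hE),
    integral_indicator_const _ hE]
  simp

theorem integrable_exp_indicator_const {μ : Measure α} [IsFiniteMeasure μ] {E : Set α}
    (hE : MeasurableSet E) (c : ℝ) :
    Integrable (fun x ↦ exp (E.indicator (fun _ ↦ c) x)) μ := by
  rw [exp_indicator_const]
  exact (integrable_const _).add ((integrable_const _).indicator hE)

end MeasureTheory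

/-- KL change of measure: for every `c > 0`,
`P(E) ≤ (KL(P‖Q) + log(1 + Q(E)(e^c − 1)))/c` where `KL(P‖Q) = ∫ log(dP/dQ) dP`. -/
theorem kl_change_of_measure {X : Type*} [MeasurableSpace X]
    (P Q : Measure X) [IsProbabilityMeasure P] [IsProbabilityMeasure Q]
    (hPQ : P ≪ Q)
    (hint : Integrable (fun x => Real.log ((P.rnDeriv Q x).toReal)) P)
    (E : Set X) (hE : MeasurableSet E) (c : ℝ) (hc : 0 < c) :
    (P E).toReal ≤
      ((∫ x, Real.log ((P.rnDeriv Q x).toReal) ∂P) +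
        Real.log (1 + (Q E).toReal * (Real.exp c - 1))) / c := by
  have key := integral_sub_log_integral_exp_le_integral_llr hPQ hint
    ((integrable_const c).indicator hE) (integrable_exp_indicator_const hE c)
  rw [integral_indicator_const _ hE, integral_exp_indicator_const hE, smul_eq_mul] at key
  rw [le_div_iff₀ hc]
  change _ ≤ ∫ x, llr P Q x ∂P + _
  simp only [measureReal_def] at key
  linarith
end

section
/- For probability measures P ≪ Q and any measurable set E, 2(1 − sqrt(P(E)Q(E)) − sqrt((1−P(E))(1−Q(E)))) ≤ H²(P;Q), where H²(P;Q) = ∫ (sqrt(dP/dQ) − 1)² dQ is the squared Hellinger distance. -/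
/-!
With `f = dP/dQ`, expanding the square gives `H²(P;Q) = 2 - 2 ∫ √f dQ`. Splitting the
Bhattacharyya integral `∫ √f dQ` over `E` and `Eᶜ` and applying Cauchy–Schwarz on each piece,
`∫_A √f dQ ≤ √(∫_A f dQ · Q(A)) ≤ √(P(A) Q(A))`, bounds it by
`√(P(E) Q(E)) + √(P(Eᶜ) Q(Eᶜ))`.
-/

open MeasureTheory

namespace MeasureTheory.Measure

variable {α : Type*} [MeasurableSpace α] {μ ν : Measure α}

lemma memLp_two_sqrt_toReal_rnDeriv [IsFiniteMeasure μ] :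
    MemLp (fun x ↦ √(μ.rnDeriv ν x).toReal) 2 ν := by
  refine (memLp_two_iff_integrable_sq ?_).2 ?_
  · exact (measurable_rnDeriv μ ν).ennreal_toReal.sqrt.aestronglyMeasurable
  · simpa only [Real.sq_sqrt ENNReal.toReal_nonneg] using integrable_toReal_rnDeriv

lemma integrable_sqrt_toReal_rnDeriv [IsFiniteMeasure μ] [IsFiniteMeasure ν] :
    Integrable (fun x ↦ √(μ.rnDeriv ν x).toReal) ν :=
  memLp_two_sqrt_toReal_rnDeriv.integrable one_le_two

lemma setIntegral_sqrt_toReal_rnDeriv_le [IsFiniteMeasure μ] [IsFiniteMeasure ν] (s : Set α) :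
    ∫ x in s, √(μ.rnDeriv ν x).toReal ∂ν ≤ √(μ.real s * ν.real s) := by
  have holder := integral_mul_le_Lp_mul_Lq_of_nonneg (μ := ν.restrict s)
    Real.HolderConjugate.two_two (.of_forall fun _ ↦ Real.sqrt_nonneg _)
    (.of_forall fun _ ↦ zero_le_one)
    (by simpa using (memLp_two_sqrt_toReal_rnDeriv (μ := μ) (ν := ν)).restrict s)
    (by simpa using memLp_const (μ := ν.restrict s) (1 : ℝ))
  have integral_sq_le : ∫ x in s, √(μ.rnDeriv ν x).toReal ^ (2 : ℝ) ∂ν ≤ μ.real s := by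
    simpa only [Real.rpow_two, Real.sq_sqrt ENNReal.toReal_nonneg]
      using setIntegral_toReal_rnDeriv_le (measure_ne_top μ s)
  simp only [mul_one, Real.one_rpow, integral_const, smul_eq_mul,
    measureReal_restrict_apply_univ] at holder
  rw [Real.sqrt_eq_rpow, Real.mul_rpow measureReal_nonneg measureReal_nonneg]
  refine holder.trans (mul_le_mul_of_nonneg_right ?_ (by positivity))
  exact Real.rpow_le_rpow (integral_nonneg fun _ ↦ by positivity) integral_sq_le (by norm_num)

lemma integral_sq_sqrt_toReal_rnDeriv_sub_one [IsFiniteMeasure μ] [IsFiniteMeasure ν]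
    (hμν : μ ≪ ν) :
    ∫ x, (√(μ.rnDeriv ν x).toReal - 1) ^ 2 ∂ν
      = μ.real Set.univ + ν.real Set.univ - 2 * ∫ x, √(μ.rnDeriv ν x).toReal ∂ν := by
  have expand (x : α) : (√(μ.rnDeriv ν x).toReal - 1) ^ 2
      = ((μ.rnDeriv ν x).toReal - 2 * √(μ.rnDeriv ν x).toReal) + 1 := by
    rw [sub_sq, Real.sq_sqrt ENNReal.toReal_nonneg]
    ring
  have hf : Integrable (fun x ↦ (μ.rnDeriv ν x).toReal) ν := integrable_toReal_rnDeriv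
  have hg : Integrable (fun x ↦ 2 * √(μ.rnDeriv ν x).toReal) ν :=
    integrable_sqrt_toReal_rnDeriv.const_mul 2
  simp_rw [expand]
  rw [integral_add (f := fun x ↦ (μ.rnDeriv ν x).toReal - 2 * √(μ.rnDeriv ν x).toReal)
      (hf.sub hg) (integrable_const 1), integral_sub hf hg, integral_const_mul,
    integral_toReal_rnDeriv hμν, integral_const, smul_eq_mul, mul_one]
  ring

lemma integral_sqrt_toReal_rnDeriv_le_add [IsFiniteMeasure μ] [IsFiniteMeasure ν]
    {s : Set α} (hs : MeasurableSet s) :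
    ∫ x, √(μ.rnDeriv ν x).toReal ∂ν
      ≤ √(μ.real s * ν.real s) + √(μ.real sᶜ * ν.real sᶜ) := by
  rw [← integral_add_compl hs integrable_sqrt_toReal_rnDeriv]
  exact add_le_add (setIntegral_sqrt_toReal_rnDeriv_le s) (setIntegral_sqrt_toReal_rnDeriv_le sᶜ)

end MeasureTheory.Measure

/-- Hellinger change of measure:
`2(1 − sqrt(P(E)Q(E)) − sqrt((1−P(E))(1−Q(E)))) ≤ H²(P;Q)` where
`H²(P;Q) = ∫ (sqrt(dP/dQ) − 1)² dQ`. -/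
theorem hellinger_change_of_measure {X : Type*} [MeasurableSpace X]
    (P Q : Measure X) [IsProbabilityMeasure P] [IsProbabilityMeasure Q]
    (hPQ : P ≪ Q) (E : Set X) (hE : MeasurableSet E) :
    2 * (1 - Real.sqrt ((P E).toReal * (Q E).toReal)
        - Real.sqrt ((1 - (P E).toReal) * (1 - (Q E).toReal)))
      ≤ ∫ x, (Real.sqrt ((P.rnDeriv Q x).toReal) - 1) ^ 2 ∂Q := by
  have bhattacharyya := Measure.integral_sqrt_toReal_rnDeriv_le_add (μ := P) (ν := Q) hE
  rw [probReal_compl_eq_one_sub hE, probReal_compl_eq_one_sub hE] at bhattacharyya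
  rw [Measure.integral_sq_sqrt_toReal_rnDeriv_sub_one hPQ, probReal_univ, probReal_univ]
  simp only [measureReal_def] at bhattacharyya
  linarith
end

section
/- For probability measures P ≪ Q, β > 1, and any measurable set E, P(E)^β Q(E)^{1−β} + (1 − P(E))^β (1 − Q(E))^{1−β} ≤ 1 + (β−1)·H_β(P‖Q), where H_β(P‖Q) := (∫ (dP/dQ)^β dQ − 1)/(β − 1) is the power-β divergence. -/
/-!
Apply Jensen's inequality for the convex function `t ↦ t ^ β` to the average of `dP/dQ` over `E`
and over `Eᶜ` with respect to `Q`: on a set `A` this average is `P(A)/Q(A)`, which gives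
`P(A)^β Q(A)^{1-β} ≤ ∫_A (dP/dQ)^β dQ`. Adding the two bounds yields `∫ (dP/dQ)^β dQ`.
-/

open MeasureTheory

theorem rpow_setIntegral_mul_measureReal_rpow_le {α : Type*} [MeasurableSpace α]
    {μ : Measure α} {f : α → ℝ} {s : Set α} {p : ℝ} (hp : 1 ≤ p) (hs : μ s ≠ ⊤)
    (hf : ∀ᵐ x ∂μ.restrict s, 0 ≤ f x) (hfi : IntegrableOn f s μ)
    (hfpi : IntegrableOn (fun x => f x ^ p) s μ) :
    (∫ x in s, f x ∂μ) ^ p * μ.real s ^ (1 - p) ≤ ∫ x in s, f x ^ p ∂μ := by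
  have hp0 : p ≠ 0 := by linarith
  rcases eq_or_ne (μ s) 0 with hs0 | hs0
  · simp [Measure.restrict_eq_zero.mpr hs0, Real.zero_rpow hp0]
  have hm : 0 < μ.real s := ENNReal.toReal_pos hs0 hs
  have jensen : (⨍ x in s, f x ∂μ) ^ p ≤ ⨍ x in s, f x ^ p ∂μ :=
    (convexOn_rpow hp).map_set_average_le
      (Real.continuous_rpow_const (by linarith)).continuousOn isClosed_Ici hs0 hs hf hfi hfpi
  rw [setAverage_eq, setAverage_eq, smul_eq_mul, smul_eq_mul,
    Real.mul_rpow (inv_nonneg.mpr hm.le) (integral_nonneg_of_ae hf), Real.inv_rpow hm.le,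
    inv_mul_le_iff₀ (Real.rpow_pos_of_pos hm p)] at jensen
  calc (∫ x in s, f x ∂μ) ^ p * μ.real s ^ (1 - p)
      ≤ μ.real s ^ p * ((μ.real s)⁻¹ * ∫ x in s, f x ^ p ∂μ) * μ.real s ^ (1 - p) := by
        gcongr
    _ = ∫ x in s, f x ^ p ∂μ := by
        rw [Real.rpow_sub hm, Real.rpow_one]
        field_simp

theorem measureReal_rpow_mul_measureReal_rpow_le_setIntegral_rnDeriv_rpow {α : Type*}
    [MeasurableSpace α] {μ ν : Measure α} [IsFiniteMeasure μ] [SigmaFinite ν] (hμν : μ ≪ ν)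
    {p : ℝ} (hp : 1 ≤ p) {s : Set α} (hs : ν s ≠ ⊤)
    (hint : IntegrableOn (fun x => (μ.rnDeriv ν x).toReal ^ p) s ν) :
    μ.real s ^ p * ν.real s ^ (1 - p) ≤ ∫ x in s, (μ.rnDeriv ν x).toReal ^ p ∂ν := by
  rw [← Measure.setIntegral_toReal_rnDeriv hμν s]
  exact rpow_setIntegral_mul_measureReal_rpow_le hp hs
    (Filter.Eventually.of_forall fun _ => ENNReal.toReal_nonneg)
    Measure.integrable_toReal_rnDeriv.integrableOn hint

/-- Power-β divergence change of measure:
`P(E)^β Q(E)^{1−β} + (1−P(E))^β (1−Q(E))^{1−β} ≤ 1 + (β−1)·H_β(P‖Q)` where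
`H_β(P‖Q) = (∫ (dP/dQ)^β dQ − 1)/(β−1)`. -/
theorem power_div_change_of_measure {X : Type*} [MeasurableSpace X]
    (P Q : Measure X) [IsProbabilityMeasure P] [IsProbabilityMeasure Q]
    (hPQ : P ≪ Q) (β : ℝ) (hβ : 1 < β)
    (hint : Integrable (fun x => ((P.rnDeriv Q x).toReal) ^ β) Q)
    (E : Set X) (hE : MeasurableSet E) :
    (P E).toReal ^ β * (Q E).toReal ^ (1 - β)
        + (1 - (P E).toReal) ^ β * (1 - (Q E).toReal) ^ (1 - β)
      ≤ 1 + (β - 1) * (((∫ x, ((P.rnDeriv Q x).toReal) ^ β ∂Q) - 1) / (β - 1)) := by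
  have bound {A : Set X} :=
    measureReal_rpow_mul_measureReal_rpow_le_setIntegral_rnDeriv_rpow hPQ hβ.le
      (measure_ne_top Q A) hint.integrableOn
  calc (P E).toReal ^ β * (Q E).toReal ^ (1 - β)
        + (1 - (P E).toReal) ^ β * (1 - (Q E).toReal) ^ (1 - β)
      = P.real E ^ β * Q.real E ^ (1 - β) + P.real Eᶜ ^ β * Q.real Eᶜ ^ (1 - β) := by
        rw [probReal_compl_eq_one_sub hE, probReal_compl_eq_one_sub hE]
        rfl
    _ ≤ (∫ x in E, (P.rnDeriv Q x).toReal ^ β ∂Q) + ∫ x in Eᶜ, (P.rnDeriv Q x).toReal ^ β ∂Q :=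
        add_le_add bound bound
    _ = ∫ x, (P.rnDeriv Q x).toReal ^ β ∂Q := integral_add_compl hE hint
    _ = 1 + (β - 1) * (((∫ x, ((P.rnDeriv Q x).toReal) ^ β ∂Q) - 1) / (β - 1)) := by
        field_simp [sub_ne_zero.mpr hβ.ne']
        ring
end

section
/- Let p, q ∈ (0,1) and β > 1, and let H_β ≥ 0 satisfy p^β q^{1−β} + (1−p)^β (1−q)^{1−β} ≤ 1 + (β−1)H_β. Set u₀ := min{1, ((1 + (β−1)H_β)·q^{β−1})^{1/β}}. Then p ≤ (q^{β−1}·max(1 + (β−1)H_β − (1−q)^{1−β}(1−u₀)^β, 0))^{1/β}. -/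
/-! Dropping the nonnegative second term of the divergence sum gives the crude bound
`p ≤ u₀`. Since `t ↦ (1 - t) ^ β` is antitone on `[0, 1]`, this in turn bounds the second
term from below by `(1 - q) ^ (1 - β) * (1 - u₀) ^ β`, and feeding that back into the
inequality gives the refined bound on `p ^ β * q ^ (1 - β)`. -/

namespace Real

lemma le_rpow_one_div_of_rpow_le {x y β : ℝ} (hx : 0 ≤ x) (hβ : 0 < β) (h : x ^ β ≤ y) :
    x ≤ y ^ (1 / β) := by
  rw [one_div, le_rpow_inv_iff_of_pos hx ((rpow_nonneg hx β).trans h) hβ]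
  exact h

lemma le_rpow_sub_one_mul_of_mul_rpow_one_sub_le {a c q β : ℝ} (hq : 0 < q)
    (h : a * q ^ (1 - β) ≤ c) : a ≤ q ^ (β - 1) * c := by
  have hq' : 0 < q ^ (β - 1) := rpow_pos_of_pos hq _
  rwa [← neg_sub, rpow_neg hq.le, ← div_eq_mul_inv, div_le_iff₀ hq', mul_comm] at h

end Real

open Real in
theorem power_div_refined_relaxation_general (p q β H : ℝ)
    (hp : p ∈ Set.Ioo (0:ℝ) 1) (hq : q ∈ Set.Ioo (0:ℝ) 1)
    (hβ : 1 < β)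
    (hineq : p ^ β * q ^ (1 - β) + (1 - p) ^ β * (1 - q) ^ (1 - β)
      ≤ 1 + (β - 1) * H) :
    p ≤ (q ^ (β - 1) *
          max (1 + (β - 1) * H -
            (1 - q) ^ (1 - β) *
              (1 - min 1 (((1 + (β - 1) * H) * q ^ (β - 1)) ^ (1 / β))) ^ β) 0)
        ^ (1 / β) := by
  obtain ⟨hp0, hp1⟩ := hp
  obtain ⟨hq0, hq1⟩ := hq
  have hβ0 : 0 < β := by linarith
  set u₀ := min 1 (((1 + (β - 1) * H) * q ^ (β - 1)) ^ (1 / β))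
  have hsecond : 0 ≤ (1 - p) ^ β * (1 - q) ^ (1 - β) := by
    have : 0 < 1 - q := by linarith
    positivity
  have hpu : p ≤ u₀ := by
    refine le_min hp1.le (le_rpow_one_div_of_rpow_le hp0.le hβ0 ?_)
    rw [mul_comm]
    exact le_rpow_sub_one_mul_of_mul_rpow_one_sub_le hq0 (by linarith)
  have hsecond_ge : (1 - q) ^ (1 - β) * (1 - u₀) ^ β ≤ (1 - p) ^ β * (1 - q) ^ (1 - β) := by
    rw [mul_comm]
    gcongr
    linarith [min_le_left 1 (((1 + (β - 1) * H) * q ^ (β - 1)) ^ (1 / β))]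
  refine le_rpow_one_div_of_rpow_le hp0.le hβ0
    ((le_rpow_sub_one_mul_of_mul_rpow_one_sub_le hq0 ?_).trans
      (mul_le_mul_of_nonneg_left (le_max_left _ _) (rpow_nonneg hq0.le _)))
  linarith

/-- Refined relaxation of the binary power-β divergence inequality:
if `p^β q^{1−β} + (1−p)^β (1−q)^{1−β} ≤ 1 + (β−1)H` then
`p ≤ (q^{β−1}·[1 + (β−1)H − (1−q)^{1−β}(1−u₀)^β]₊)^{1/β}` where
`u₀ = min{1, ((1+(β−1)H) q^{β−1})^{1/β}}`. -/
theorem power_div_refined_relaxation (p q β H : ℝ)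
    (hp : p ∈ Set.Ioo (0:ℝ) 1) (hq : q ∈ Set.Ioo (0:ℝ) 1)
    (hβ : 1 < β) (hH : 0 ≤ H)
    (hineq : p ^ β * q ^ (1 - β) + (1 - p) ^ β * (1 - q) ^ (1 - β)
      ≤ 1 + (β - 1) * H) :
    p ≤ (q ^ (β - 1) *
          max (1 + (β - 1) * H -
            (1 - q) ^ (1 - β) *
              (1 - min 1 (((1 + (β - 1) * H) * q ^ (β - 1)) ^ (1 / β))) ^ β) 0)
        ^ (1 / β) :=
  power_div_refined_relaxation_general p q β H hp hq hβ hineq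
end

section
/- Let p, q ∈ (0,1) and let r ≥ 0 satisfy q²/p + (1−q)²/(1−p) ≤ 1 + r. Then p ≤ (r + 2q + sqrt(r² + 4r·q(1−q))) / (2(1+r)). In particular, for probability measures P ≪ Q with r = χ²(Q‖P), this bounds P(E) for any measurable E via the reverse chi-squared divergence. -/
/-!
`q²/p + (1-q)²/(1-p) - 1 = (q-p)²/(p(1-p))` is the χ²-divergence between the Bernoulli laws of
`E`, so the hypothesis reads `(q-p)² ≤ r p(1-p)`. This says `p` lies between the roots of
`(1+r)x² - (2q+r)x + q²`, whose discriminant is `r² + 4rq(1-q)`.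
-/

theorem sq_div_add_one_sub_sq_div_one_sub {p : ℝ} (hp₀ : p ≠ 0) (hp₁ : p ≠ 1) (q : ℝ) :
    q ^ 2 / p + (1 - q) ^ 2 / (1 - p) = 1 + (q - p) ^ 2 / (p * (1 - p)) := by
  have : 1 - p ≠ 0 := sub_ne_zero.mpr hp₁.symm
  field_simp
  ring

theorem le_quadratic_root_of_nonpos {a b c x : ℝ} (ha : 0 < a)
    (h : a * (x * x) + b * x + c ≤ 0) : x ≤ (-b + √(discrim a b c)) / (2 * a) := by
  have hsq : (2 * a * x + b) ^ 2 ≤ discrim a b c := by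
    have : (2 * a * x + b) ^ 2 = discrim a b c + 4 * a * (a * (x * x) + b * x + c) := by
      unfold discrim; ring
    nlinarith
  have := (le_abs_self _).trans (Real.abs_le_sqrt hsq)
  rw [le_div_iff₀ (by positivity)]
  linarith

theorem reverse_chisq_change_of_measure_general (p q r : ℝ)
    (hp : p ∈ Set.Ioo (0:ℝ) 1) (hr : 0 ≤ r)
    (hineq : q ^ 2 / p + (1 - q) ^ 2 / (1 - p) ≤ 1 + r) :
    p ≤ (r + 2 * q + Real.sqrt (r ^ 2 + 4 * r * q * (1 - q))) / (2 * (1 + r)) := by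
  obtain ⟨hp₀, hp₁⟩ := hp
  have hvar : 0 < p * (1 - p) := mul_pos hp₀ (sub_pos.mpr hp₁)
  rw [sq_div_add_one_sub_sq_div_one_sub hp₀.ne' hp₁.ne, add_le_add_iff_left,
    div_le_iff₀ hvar] at hineq
  have hquad : (1 + r) * (p * p) + -(2 * q + r) * p + q ^ 2 ≤ 0 := by linarith
  convert le_quadratic_root_of_nonpos (by linarith) hquad using 4
  · ring
  · unfold discrim; ring

/-- Reverse chi-squared change of measure (scalar form): if
`q²/p + (1−q)²/(1−p) ≤ 1 + r` with `r ≥ 0`, then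
`p ≤ (r + 2q + sqrt(r² + 4r q(1−q)))/(2(1+r))`. -/
theorem reverse_chisq_change_of_measure (p q r : ℝ)
    (hp : p ∈ Set.Ioo (0:ℝ) 1) (hq : q ∈ Set.Ioo (0:ℝ) 1) (hr : 0 ≤ r)
    (hineq : q ^ 2 / p + (1 - q) ^ 2 / (1 - p) ≤ 1 + r) :
    p ≤ (r + 2 * q + Real.sqrt (r ^ 2 + 4 * r * q * (1 - q))) / (2 * (1 + r)) :=
  reverse_chisq_change_of_measure_general p q r hp hr hineq
end

section
/- Let p, q ∈ (0,1) and let V ≥ 0 satisfy 2(p−q)²/((p+q)(2−p−q)) ≤ V. Then p ≤ (V(1−q) + 2q + sqrt(V(V + 8q(1−q)))) / (V + 2). -/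
/-!
Clearing denominators, the hypothesis says that `p` lies where the quadratic
`(V + 2) x² - 2 (V (1 - q) + 2 q) x + (V + 2) q² - 2 V q` is nonpositive, i.e. below its
larger root; its reduced discriminant is `V (V + 8 q (1 - q))`.
-/

theorem le_upper_root_of_quadratic_nonpos {a b c x : ℝ} (ha : 0 < a)
    (h : a * x ^ 2 - 2 * b * x + c ≤ 0) :
    x ≤ (b + √(b ^ 2 - a * c)) / a := by
  have hsq : (a * x - b) ^ 2 ≤ b ^ 2 - a * c := by
    nlinarith [mul_nonpos_of_nonneg_of_nonpos ha.le h]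
  have habs : |a * x - b| ≤ √(b ^ 2 - a * c) := Real.abs_le_sqrt hsq
  rw [le_div_iff₀ ha]
  linarith [le_abs_self (a * x - b)]

theorem quadratic_nonpos_of_div_le {p q V : ℝ} (hpq : 0 < p + q) (hpq' : 0 < 2 - p - q)
    (h : 2 * (p - q) ^ 2 / ((p + q) * (2 - p - q)) ≤ V) :
    (V + 2) * p ^ 2 - 2 * (V * (1 - q) + 2 * q) * p + ((V + 2) * q ^ 2 - 2 * V * q) ≤ 0 := by
  rw [div_le_iff₀ (mul_pos hpq hpq')] at h
  linarith

/-- Vincze–Le Cam change of measure (scalar form): if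
`2(p−q)²/((p+q)(2−p−q)) ≤ V` with `V ≥ 0`, then
`p ≤ (V(1−q) + 2q + sqrt(V(V + 8q(1−q))))/(V+2)`. -/
theorem vincze_lecam_change_of_measure (p q V : ℝ)
    (hp : p ∈ Set.Ioo (0:ℝ) 1) (hq : q ∈ Set.Ioo (0:ℝ) 1) (hV : 0 ≤ V)
    (hineq : 2 * (p - q) ^ 2 / ((p + q) * (2 - p - q)) ≤ V) :
    p ≤ (V * (1 - q) + 2 * q + Real.sqrt (V * (V + 8 * q * (1 - q)))) / (V + 2) := by
  obtain ⟨hp0, hp1⟩ := hp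
  obtain ⟨hq0, hq1⟩ := hq
  have hquad := quadratic_nonpos_of_div_le (by linarith) (by linarith) hineq
  have hdisc : (V * (1 - q) + 2 * q) ^ 2 - (V + 2) * ((V + 2) * q ^ 2 - 2 * V * q)
      = V * (V + 8 * q * (1 - q)) := by ring
  simpa only [hdisc] using le_upper_root_of_quadratic_nonpos (by linarith) hquad
end

section
/- (Data processing for indicator channel.) Let f : (0,∞) → ℝ be convex with f(1) = 0, extended by f(0) = lim_{t↓0} f(t). For probability measures P ≪ Q and any measurable set E with q := Q(E) ∈ (0,1) and p := P(E), one has D_f(P‖Q) ≥ q·f(p/q) + (1−q)·f((1−p)/(1−q)). -/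
/-!
Split `∫ f(dP/dQ) dQ` into the integrals over `E` and `Eᶜ` and apply Jensen's inequality to
`dP/dQ` on each piece: on a set `A` the `Q`-average of `dP/dQ` is `P(A)/Q(A)`. Jensen's inequality
on the closed half-line `[0, ∞)` needs `f` continuous there, which at `0` is the limit condition.
-/

open MeasureTheory Set Filter Topology

theorem ConvexOn.continuousOn_Ici_of_tendsto {f : ℝ → ℝ} {a : ℝ} (hf : ConvexOn ℝ (Ici a) f)
    (ha : Tendsto f (𝓝[>] a) (𝓝 (f a))) : ContinuousOn f (Ici a) := by
  intro x hx
  rcases (mem_Ici.mp hx).eq_or_lt with rfl | hax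
  · exact continuousWithinAt_Ioi_iff_Ici.mp ha
  · have hinterior := hf.continuousOn_interior
    rw [interior_Ici] at hinterior
    exact (hinterior.continuousAt (Ioi_mem_nhds hax)).continuousWithinAt

theorem ConvexOn.measureReal_mul_map_div_le_setIntegral {α : Type*} [MeasurableSpace α]
    {μ : Measure α} {s : Set ℝ} {g : ℝ → ℝ} {f : α → ℝ} {t : Set α}
    (hg : ConvexOn ℝ s g) (hgc : ContinuousOn g s) (hsc : IsClosed s) (ht : 0 < μ.real t)
    (hfs : ∀ᵐ x ∂μ.restrict t, f x ∈ s) (hfi : IntegrableOn f t μ)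
    (hgi : IntegrableOn (g ∘ f) t μ) :
    μ.real t * g ((∫ x in t, f x ∂μ) / μ.real t) ≤ ∫ x in t, g (f x) ∂μ := by
  obtain ⟨ht0, httop⟩ := ENNReal.toReal_pos_iff.mp ht
  have hjensen := hg.map_set_average_le hgc hsc ht0.ne' httop.ne hfs hfi hgi
  rw [setAverage_eq, setAverage_eq, smul_eq_mul, smul_eq_mul, ← div_eq_inv_mul,
    ← div_eq_inv_mul, le_div_iff₀ ht] at hjensen
  linarith

theorem measureReal_mul_map_div_le_setIntegral_rnDeriv {X : Type*} [MeasurableSpace X]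
    {P Q : Measure X} [IsFiniteMeasure P] [IsFiniteMeasure Q] (hPQ : P ≪ Q) {f : ℝ → ℝ}
    (hconv : ConvexOn ℝ (Ici 0) f) (hcont : ContinuousOn f (Ici 0)) {A : Set X}
    (hA : 0 < Q.real A) (hint : IntegrableOn (fun x => f (P.rnDeriv Q x).toReal) A Q) :
    Q.real A * f (P.real A / Q.real A) ≤ ∫ x in A, f (P.rnDeriv Q x).toReal ∂Q := by
  have hjensen := hconv.measureReal_mul_map_div_le_setIntegral hcont isClosed_Ici hA
    (ae_of_all _ fun _ => ENNReal.toReal_nonneg) Measure.integrable_toReal_rnDeriv.integrableOn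
    hint
  rwa [Measure.setIntegral_toReal_rnDeriv hPQ] at hjensen

theorem dpi_indicator_channel_general {X : Type*} [MeasurableSpace X]
    (P Q : Measure X) [IsProbabilityMeasure P] [IsProbabilityMeasure Q]
    (hPQ : P ≪ Q) (f : ℝ → ℝ)
    (hconv : ConvexOn ℝ (Set.Ici 0) f)
    (hf0 : Filter.Tendsto f (nhdsWithin 0 (Set.Ioi 0)) (nhds (f 0)))
    (hint : Integrable (fun x => f ((P.rnDeriv Q x).toReal)) Q)
    (E : Set X) (hE : MeasurableSet E)
    (hq0 : 0 < (Q E).toReal) (hq1 : (Q E).toReal < 1) :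
    (Q E).toReal * f ((P E).toReal / (Q E).toReal)
      + (1 - (Q E).toReal) * f ((1 - (P E).toReal) / (1 - (Q E).toReal))
      ≤ ∫ x, f ((P.rnDeriv Q x).toReal) ∂Q := by
  have hcont := hconv.continuousOn_Ici_of_tendsto hf0
  have hQc : Q.real Eᶜ = 1 - Q.real E := probReal_compl_eq_one_sub hE
  have hPc : P.real Eᶜ = 1 - P.real E := probReal_compl_eq_one_sub hE
  have hjensenE := measureReal_mul_map_div_le_setIntegral_rnDeriv hPQ hconv hcont hq0
    hint.integrableOn
  have hjensenEc := measureReal_mul_map_div_le_setIntegral_rnDeriv hPQ hconv hcont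
    (A := Eᶜ) (by rw [hQc]; exact sub_pos.mpr hq1) hint.integrableOn
  rw [hQc, hPc] at hjensenEc
  rw [← integral_add_compl hE hint]
  exact add_le_add hjensenE hjensenEc

/-- Data processing inequality for the indicator channel: for convex `f` with
`f(1) = 0` (extended continuously to `0`), `P ≪ Q` and `q := Q(E) ∈ (0,1)`,
`D_f(P‖Q) ≥ q f(p/q) + (1−q) f((1−p)/(1−q))` with `p := P(E)`. -/
theorem dpi_indicator_channel {X : Type*} [MeasurableSpace X]
    (P Q : Measure X) [IsProbabilityMeasure P] [IsProbabilityMeasure Q]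
    (hPQ : P ≪ Q) (f : ℝ → ℝ)
    (hconv : ConvexOn ℝ (Set.Ici 0) f) (hf1 : f 1 = 0)
    (hf0 : Filter.Tendsto f (nhdsWithin 0 (Set.Ioi 0)) (nhds (f 0)))
    (hint : Integrable (fun x => f ((P.rnDeriv Q x).toReal)) Q)
    (E : Set X) (hE : MeasurableSet E)
    (hq0 : 0 < (Q E).toReal) (hq1 : (Q E).toReal < 1) :
    (Q E).toReal * f ((P E).toReal / (Q E).toReal)
      + (1 - (Q E).toReal) * f ((1 - (P E).toReal) / (1 - (Q E).toReal))
      ≤ ∫ x, f ((P.rnDeriv Q x).toReal) ∂Q :=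
  dpi_indicator_channel_general P Q hPQ f hconv hf0 hint E hE hq0 hq1
end
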